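/- arXiv:1903.06372 — 3 statements merged into one kernel-verified Lean document; each statement's English description precedes it below -/
import Mathlib

section
/- Multi-agent off-policy policy gradient theorem (Theorem 1): For every agent i and every parameter θ = (θ^1, …, θ^n), the gradient of the off-policy objective J_μ(θ) = Σ_{s∈S} d_μ(s) v_θ(s) with respect to the agent's local parameter θ^i satisfies ∇_{θ^i} J_μ(θ) = Σ_{s∈S} m(s) Σ_{a∈A} π_θ(a|s) q_θ(s,a) ∇_{θ^i} log π^i_{θ^i}(a^i|s), where m is the emphatic weighting vector defined by mᵀ = d_μᵀ (I − P_{θ,γ})⁻¹. -/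
/-!
The value function solves the Bellman equation `v = r_π + P_{θ,γ} v`, so differentiating it gives
`(I - P_{θ,γ}) ∂v = ∂r_π + (∂P_{θ,γ}) v`. Hence `∂J = d_μᵀ (I - P_{θ,γ})⁻¹ (∂r_π + (∂P_{θ,γ}) v)
= mᵀ (∂r_π + (∂P_{θ,γ}) v)`, and regrouping by actions turns `∂r_π(s) + ((∂P_{θ,γ}) v)(s)` into
`∑ₐ ∂π(a|s) q(s,a)`. Only the `i`-th factor of the product policy depends on `θ^i`, so
`∂_{θ^i} π = π ∇_{θ^i} log π^i`.
-/

open Matrix Topology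

theorem eq_inv_one_sub_mulVec_iff {R S : Type*} [CommRing R] [Fintype S] [DecidableEq S]
    {M : Matrix S S R} (hM : IsUnit (1 - M).det) {w b : S → R} :
    w = (1 - M)⁻¹ *ᵥ b ↔ w = b + M *ᵥ w := by
  have : w = (1 - M)⁻¹ *ᵥ b ↔ (1 - M) *ᵥ w = b :=
    ⟨fun h => by rw [h, mulVec_mulVec, mul_nonsing_inv _ hM, one_mulVec],
      fun h => by rw [← h, mulVec_mulVec, nonsing_inv_mul _ hM, one_mulVec]⟩
  rw [this, sub_mulVec, one_mulVec, sub_eq_iff_eq_add]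

theorem isUnit_det_one_sub_of_sum_lt_one {S : Type*} [Fintype S] [DecidableEq S]
    {M : Matrix S S ℝ} (h0 : ∀ s t, 0 ≤ M s t) (h1 : ∀ s, ∑ t, M s t < 1) :
    IsUnit (1 - M).det := by
  refine isUnit_iff_ne_zero.mpr (det_ne_zero_of_sum_row_lt_diag fun s => ?_)
  calc ∑ t ∈ Finset.univ.erase s, ‖(1 - M) s t‖
      = ∑ t ∈ Finset.univ.erase s, M s t := by
        refine Finset.sum_congr rfl fun t ht => ?_
        rw [Matrix.sub_apply, one_apply_ne (Finset.ne_of_mem_erase ht).symm, zero_sub, norm_neg,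
          Real.norm_of_nonneg (h0 s t)]
    _ = ∑ t, M s t - M s s := by rw [Finset.sum_erase_eq_sub (Finset.mem_univ s)]
    _ < 1 - M s s := by linarith [h1 s]
    _ ≤ ‖(1 - M) s s‖ := by rw [Matrix.sub_apply, one_apply_eq]; exact Real.le_norm_self _

section Differentiability

variable {E : Type*} [NormedAddCommGroup E] [NormedSpace ℝ E] {S : Type*} [Fintype S]
  [DecidableEq S] {A : E → Matrix S S ℝ} {x : E}

theorem DifferentiableAt.matrix_det (hA : ∀ s t, DifferentiableAt ℝ (fun y => A y s t) x) :
    DifferentiableAt ℝ (fun y => (A y).det) x := by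
  simp only [det_apply]
  fun_prop

theorem DifferentiableAt.matrix_inv_apply
    (hA : ∀ s t, DifferentiableAt ℝ (fun y => A y s t) x) (hx : (A x).det ≠ 0) (s t : S) :
    DifferentiableAt ℝ (fun y => (A y)⁻¹ s t) x := by
  have hadj : DifferentiableAt ℝ (fun y => (A y).adjugate s t) x := by
    simp only [adjugate_apply]
    refine DifferentiableAt.matrix_det fun u w => ?_
    by_cases hu : u = t
    · simp [hu]
    · simpa [updateRow_apply, hu] using hA u w
  simp only [inv_def, Ring.inverse_eq_inv, Matrix.smul_apply, smul_eq_mul]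
  exact ((DifferentiableAt.matrix_det hA).inv hx).mul hadj

end Differentiability

section ValueGradient

variable {E : Type*} [NormedAddCommGroup E] [NormedSpace ℝ E] {S : Type*} [Fintype S]
  [DecidableEq S] {M : E → Matrix S S ℝ} {r : E → S → ℝ} {M' : S → S → E →L[ℝ] ℝ}
  {r' : S → E →L[ℝ] ℝ} {x : E}

theorem hasFDerivAt_inv_one_sub_mulVec_apply
    (hM : ∀ s t, HasFDerivAt (fun y => M y s t) (M' s t) x)
    (hr : ∀ s, HasFDerivAt (fun y => r y s) (r' s) x) (hx : IsUnit (1 - M x).det) (s : S) :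
    HasFDerivAt (fun y => ((1 - M y)⁻¹ *ᵥ r y) s)
      (∑ t, (1 - M x)⁻¹ s t • (r' t + ∑ u, ((1 - M x)⁻¹ *ᵥ r x) u • M' t u)) x := by
  set v := fun y => (1 - M y)⁻¹ *ᵥ r y
  have hA : ∀ s t, DifferentiableAt ℝ (fun y => (1 - M y) s t) x := fun s t => by
    simpa only [Matrix.sub_apply] using (hM s t).differentiableAt.const_sub _
  have hdet : (1 - M x).det ≠ 0 := isUnit_iff_ne_zero.mp hx
  have hv : ∀ s, DifferentiableAt ℝ (fun y => v y s) x := fun s => by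
    simp only [v, mulVec, dotProduct]
    exact DifferentiableAt.fun_sum fun t _ =>
      (DifferentiableAt.matrix_inv_apply hA hdet s t).mul (hr t).differentiableAt
  have hbellman : ∀ᶠ y in 𝓝 x, ∀ s, v y s = r y s + ∑ t, M y s t * v y t := by
    filter_upwards [(DifferentiableAt.matrix_det hA).continuousAt.eventually_ne hdet] with y hy
    exact congrFun ((eq_inv_one_sub_mulVec_iff (isUnit_iff_ne_zero.mpr hy)).mp rfl)
  set v' := fun s => fderiv ℝ (fun y => v y s) x
  have hv' : ∀ s, v' s = r' s + ∑ t, (M x s t • v' t + v x t • M' s t) := fun s =>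
    ((hr s).add (HasFDerivAt.fun_sum fun t _ => (hM s t).mul (hv t).hasFDerivAt)
      |>.congr_of_eventuallyEq (hbellman.mono fun y hy => hy s)).fderiv
  have hsolve : ∀ h,
      (fun s => v' s h) = (1 - M x)⁻¹ *ᵥ fun t => (r' t + ∑ u, v x u • M' t u) h :=
    fun h => (eq_inv_one_sub_mulVec_iff hx).mpr <| funext fun s => by
      rw [hv' s]
      simp only [_root_.add_apply, _root_.sum_apply, _root_.smul_apply, smul_eq_mul,
        Finset.sum_add_distrib, Pi.add_apply, mulVec, dotProduct]
      ring
  have hv's : v' s = ∑ t, (1 - M x)⁻¹ s t • (r' t + ∑ u, v x u • M' t u) :=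
    ContinuousLinearMap.ext fun h => by
      rw [show v' s h = _ from congrFun (hsolve h) s]
      simp [mulVec, dotProduct, mul_add]
  exact hv's ▸ (hv s).hasFDerivAt

theorem hasFDerivAt_dotProduct_inv_one_sub_mulVec (d : S → ℝ)
    (hM : ∀ s t, HasFDerivAt (fun y => M y s t) (M' s t) x)
    (hr : ∀ s, HasFDerivAt (fun y => r y s) (r' s) x) (hx : IsUnit (1 - M x).det) :
    HasFDerivAt (fun y => d ⬝ᵥ ((1 - M y)⁻¹ *ᵥ r y))
      (∑ s, (d ᵥ* (1 - M x)⁻¹) s • (r' s + ∑ t, ((1 - M x)⁻¹ *ᵥ r x) t • M' s t)) x := by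
  refine (HasFDerivAt.fun_sum (u := Finset.univ) fun s _ =>
    (hasFDerivAt_inv_one_sub_mulVec_apply hM hr hx s).const_mul (d s)).congr_fderiv ?_
  simp only [vecMul, dotProduct, Finset.smul_sum, Finset.sum_smul, smul_smul]
  exact Finset.sum_comm

end ValueGradient

theorem hasFDerivAt_off_policy_objective {E : Type*} [NormedAddCommGroup E] [NormedSpace ℝ E]
    {S A : Type*} [Fintype S] [DecidableEq S] [Fintype A]
    {π : E → S → A → ℝ} {π' : S → A → E →L[ℝ] ℝ} {x : E}
    (hπ : ∀ s a, HasFDerivAt (fun y => π y s a) (π' s a) x)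
    (P : S → A → S → ℝ) (rbar : S → A → ℝ) (γ : ℝ) (d : S → ℝ) {M : E → Matrix S S ℝ}
    (hM : ∀ y s t, M y s t = γ * ∑ a, π y s a * P s a t) (hx : IsUnit (1 - M x).det) :
    HasFDerivAt (fun y => d ⬝ᵥ ((1 - M y)⁻¹ *ᵥ fun s => ∑ a, π y s a * rbar s a))
      (∑ s, (d ᵥ* (1 - M x)⁻¹) s • ∑ a,
        (rbar s a + γ * ∑ t, P s a t * ((1 - M x)⁻¹ *ᵥ fun s => ∑ a, π x s a * rbar s a) t) •
          π' s a) x := by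
  have hM' : ∀ s t, HasFDerivAt (fun y => M y s t) (γ • ∑ a, P s a t • π' s a) x := fun s t => by
    simp only [hM]
    exact (HasFDerivAt.fun_sum fun a _ => (hπ s a).mul_const (P s a t)).const_mul γ
  have hr : ∀ s, HasFDerivAt (fun y => ∑ a, π y s a * rbar s a) (∑ a, rbar s a • π' s a) x :=
    fun s => HasFDerivAt.fun_sum fun a _ => (hπ s a).mul_const (rbar s a)
  convert hasFDerivAt_dotProduct_inv_one_sub_mulVec d hM' hr hx using 4 with s
  simp only [add_smul, Finset.sum_add_distrib, Finset.smul_sum, Finset.mul_sum]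
  congr 1
  simp only [Finset.sum_smul, smul_smul]
  rw [Finset.sum_comm]
  refine Finset.sum_congr rfl fun a _ => Finset.sum_congr rfl fun t _ => ?_
  module

theorem HasFDerivAt.eq_smul_fderiv_log {E : Type*} [NormedAddCommGroup E] [NormedSpace ℝ E]
    {f : E → ℝ} {f' : E →L[ℝ] ℝ} {x : E} (hf : HasFDerivAt f f' x) (hx : f x ≠ 0) :
    f' = f x • fderiv ℝ (fun y => Real.log (f y)) x := by
  rw [(hf.log hx).fderiv, smul_smul, mul_inv_cancel₀ hx, one_smul]

theorem hasFDerivAt_prod_update {ι : Type*} [Fintype ι] [DecidableEq ι] {E : ι → Type*}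
    [∀ j, NormedAddCommGroup (E j)] [∀ j, NormedSpace ℝ (E j)] {f : ∀ j, E j → ℝ}
    {θ : ∀ j, E j} {i : ι} (hf : DifferentiableAt ℝ (f i) (θ i)) (hi : f i (θ i) ≠ 0) :
    HasFDerivAt (fun y => ∏ j, f j (Function.update θ i y j))
      ((∏ j, f j (θ j)) • fderiv ℝ (fun y => Real.log (f i y)) (θ i)) (θ i) := by
  set c := ∏ j ∈ Finset.univ.erase i, f j (θ j)
  have hsplit : ∀ y, ∏ j, f j (Function.update θ i y j) = f i y * c := fun y => by
    rw [← Finset.mul_prod_erase _ _ (Finset.mem_univ i), Function.update_self]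
    congr 1
    exact Finset.prod_congr rfl fun j hj => by
      rw [Function.update_of_ne (Finset.ne_of_mem_erase hj)]
  simp only [hsplit]
  rw [← Finset.mul_prod_erase _ _ (Finset.mem_univ i), mul_comm, mul_smul,
    ← hf.hasFDerivAt.eq_smul_fderiv_log hi]
  exact hf.hasFDerivAt.mul_const c

theorem multi_agent_off_policy_policy_gradient_general
    {S : Type*} [Fintype S] [DecidableEq S]
    -- n agents, agent i has parameter dimension md i and finite action set Ai i
    (n : ℕ) (md : Fin n → ℕ) (Ai : Fin n → Type*)
    [∀ i, Fintype (Ai i)]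
    -- transition kernel on joint actions
    (P : S → (∀ i, Ai i) → S → ℝ)
    (hP0 : ∀ s a s', 0 ≤ P s a s') (hP1 : ∀ s a, ∑ s', P s a s' = 1)
    -- reward and discount
    (rbar : S → (∀ i, Ai i) → ℝ)
    (γ : ℝ) (hγ0 : 0 < γ) (hγ1 : γ < 1)
    -- local target policies: positive, normalized, continuously differentiable
    (πl : (i : Fin n) → EuclideanSpace ℝ (Fin (md i)) → S → Ai i → ℝ)
    (hπpos : ∀ i x s ai, 0 < πl i x s ai)
    (hπ1 : ∀ i x s, ∑ ai, πl i x s ai = 1)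
    (hπC1 : ∀ i s ai, ContDiff ℝ 1 (fun x => πl i x s ai))
    -- joint policy π_θ(a|s) = ∏ i, π^i_{θ^i}(a^i|s)
    (π : (∀ i, EuclideanSpace ℝ (Fin (md i))) → S → (∀ i, Ai i) → ℝ)
    (hπ : ∀ θ s a, π θ s a = ∏ i, πl i (θ i) s (a i))
    -- fixed distribution d_μ
    (dμ : S → ℝ)
    -- the matrix P_{θ,γ}
    (Pγ : (∀ i, EuclideanSpace ℝ (Fin (md i))) → Matrix S S ℝ)
    (hPγ : ∀ θ s s', Pγ θ s s' = γ * ∑ a, π θ s a * P s a s')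
    -- the value function v_θ = (I − P_{θ,γ})⁻¹ r_{π_θ}
    (v : (∀ i, EuclideanSpace ℝ (Fin (md i))) → S → ℝ)
    (hv : ∀ θ, v θ = (1 - Pγ θ)⁻¹ *ᵥ (fun s => ∑ a, π θ s a * rbar s a))
    -- the action-value function q_θ
    (q : (∀ i, EuclideanSpace ℝ (Fin (md i))) → S → (∀ i, Ai i) → ℝ)
    (hq : ∀ θ s a, q θ s a = rbar s a + γ * ∑ s', P s a s' * v θ s')
    -- the off-policy objective J_μ(θ) = ∑_s d_μ(s) v_θ(s)
    (J : (∀ i, EuclideanSpace ℝ (Fin (md i))) → ℝ)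
    (hJ : ∀ θ, J θ = ∑ s, dμ s * v θ s)
    -- the emphatic weighting mᵀ = d_μᵀ (I − P_{θ,γ})⁻¹
    (em : (∀ i, EuclideanSpace ℝ (Fin (md i))) → S → ℝ)
    (hem : ∀ θ s, em θ s = ∑ s', dμ s' * (1 - Pγ θ)⁻¹ s' s)
    -- any agent i and any parameter θ
    (i : Fin n) (θ : ∀ i, EuclideanSpace ℝ (Fin (md i))) :
    fderiv ℝ (fun x => J (Function.update θ i x)) (θ i)
      = ∑ s, ∑ a, (em θ s * (π θ s a * q θ s a)) •
          fderiv ℝ (fun x => Real.log (πl i x s (a i))) (θ i) := by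
  have hscore : ∀ s a, HasFDerivAt (fun x => π (Function.update θ i x) s a)
      (π θ s a • fderiv ℝ (fun x => Real.log (πl i x s (a i))) (θ i)) (θ i) := fun s a => by
    simp only [hπ]
    exact hasFDerivAt_prod_update (f := fun j x => πl j x s (a j))
      ((hπC1 i s (a i)).differentiable one_ne_zero _) (hπpos i _ s _).ne'
  have hπsum : ∀ s, ∑ a, π θ s a = 1 := fun s => by
    simp only [hπ, ← Fintype.prod_sum, hπ1, Finset.prod_const_one]
  have hrow : ∀ s, ∑ s', Pγ θ s s' = γ := fun s => by
    simp only [hPγ, ← Finset.mul_sum]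
    rw [Finset.sum_comm]
    simp only [← Finset.mul_sum, hP1, mul_one, hπsum]
  have hPγ0 : ∀ s s', 0 ≤ Pγ θ s s' := fun s s' => by
    simp only [hPγ, hπ]
    exact mul_nonneg hγ0.le <| Finset.sum_nonneg fun a _ =>
      mul_nonneg (Finset.prod_nonneg fun j _ => (hπpos j _ s _).le) (hP0 s a s')
  have hunit : IsUnit (1 - Pγ θ).det :=
    isUnit_det_one_sub_of_sum_lt_one hPγ0 fun s => hrow s ▸ hγ1
  have hJv : (fun x => J (Function.update θ i x)) = fun x =>
      dμ ⬝ᵥ ((1 - Pγ (Function.update θ i x))⁻¹ *ᵥ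
        fun s => ∑ a, π (Function.update θ i x) s a * rbar s a) :=
    funext fun x => by rw [hJ, hv]; rfl
  rw [hJv, (hasFDerivAt_off_policy_objective hscore P rbar γ dμ (fun _ => hPγ _)
    (by simpa using hunit)).fderiv]
  simp only [Function.update_eq_self, hq, hv, hem, vecMul, dotProduct, Finset.smul_sum, smul_smul]
  refine Finset.sum_congr rfl fun s _ => Finset.sum_congr rfl fun a _ => ?_
  module

/-- Multi-agent off-policy policy gradient theorem (Theorem 1):
`∇_{θ^i} J_μ(θ) = ∑_s m(s) ∑_a π_θ(a|s) q_θ(s,a) ∇_{θ^i} log π^i_{θ^i}(a^i|s)`,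
where `mᵀ = d_μᵀ (I − P_{θ,γ})⁻¹`. -/
theorem multi_agent_off_policy_policy_gradient
    {S : Type*} [Fintype S] [Nonempty S] [DecidableEq S]
    -- n agents, agent i has parameter dimension md i and finite action set Ai i
    (n : ℕ) (md : Fin n → ℕ) (Ai : Fin n → Type*)
    [∀ i, Fintype (Ai i)] [∀ i, Nonempty (Ai i)]
    -- transition kernel on joint actions
    (P : S → (∀ i, Ai i) → S → ℝ)
    (hP0 : ∀ s a s', 0 ≤ P s a s') (hP1 : ∀ s a, ∑ s', P s a s' = 1)
    -- reward and discount
    (rbar : S → (∀ i, Ai i) → ℝ)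
    (γ : ℝ) (hγ0 : 0 < γ) (hγ1 : γ < 1)
    -- local target policies: positive, normalized, continuously differentiable
    (πl : (i : Fin n) → EuclideanSpace ℝ (Fin (md i)) → S → Ai i → ℝ)
    (hπpos : ∀ i x s ai, 0 < πl i x s ai)
    (hπ1 : ∀ i x s, ∑ ai, πl i x s ai = 1)
    (hπC1 : ∀ i s ai, ContDiff ℝ 1 (fun x => πl i x s ai))
    -- joint policy π_θ(a|s) = ∏ i, π^i_{θ^i}(a^i|s)
    (π : (∀ i, EuclideanSpace ℝ (Fin (md i))) → S → (∀ i, Ai i) → ℝ)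
    (hπ : ∀ θ s a, π θ s a = ∏ i, πl i (θ i) s (a i))
    -- fixed distribution d_μ
    (dμ : S → ℝ) (hdμ0 : ∀ s, 0 ≤ dμ s) (hdμ1 : ∑ s, dμ s = 1)
    -- the matrix P_{θ,γ}
    (Pγ : (∀ i, EuclideanSpace ℝ (Fin (md i))) → Matrix S S ℝ)
    (hPγ : ∀ θ s s', Pγ θ s s' = γ * ∑ a, π θ s a * P s a s')
    -- the value function v_θ = (I − P_{θ,γ})⁻¹ r_{π_θ}
    (v : (∀ i, EuclideanSpace ℝ (Fin (md i))) → S → ℝ)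
    (hv : ∀ θ, v θ = (1 - Pγ θ)⁻¹ *ᵥ (fun s => ∑ a, π θ s a * rbar s a))
    -- the action-value function q_θ
    (q : (∀ i, EuclideanSpace ℝ (Fin (md i))) → S → (∀ i, Ai i) → ℝ)
    (hq : ∀ θ s a, q θ s a = rbar s a + γ * ∑ s', P s a s' * v θ s')
    -- the off-policy objective J_μ(θ) = ∑_s d_μ(s) v_θ(s)
    (J : (∀ i, EuclideanSpace ℝ (Fin (md i))) → ℝ)
    (hJ : ∀ θ, J θ = ∑ s, dμ s * v θ s)
    -- the emphatic weighting mᵀ = d_μᵀ (I − P_{θ,γ})⁻¹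
    (em : (∀ i, EuclideanSpace ℝ (Fin (md i))) → S → ℝ)
    (hem : ∀ θ s, em θ s = ∑ s', dμ s' * (1 - Pγ θ)⁻¹ s' s)
    -- any agent i and any parameter θ
    (i : Fin n) (θ : ∀ i, EuclideanSpace ℝ (Fin (md i))) :
    fderiv ℝ (fun x => J (Function.update θ i x)) (θ i)
      = ∑ s, ∑ a, (em θ s * (π θ s a * q θ s a)) •
          fderiv ℝ (fun x => Real.log (πl i x s (a i))) (θ i) :=
  multi_agent_off_policy_policy_gradient_general n md Ai P hP0 hP1 rbar γ hγ0 hγ1 πl hπpos hπ1 hπC1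
    π hπ dμ Pγ hPγ v hv q hq J hJ em hem i θ
end

section
/- Unique solution of the generalized Bellman equation of ETD(λ): let P be a k×k row-stochastic matrix (nonnegative entries, each row summing to 1), γ ∈ (0,1), λ ∈ [0,1], and r ∈ ℝ^k. Then I − γλP is invertible; defining P^λ = I − (I − γλP)⁻¹(I − γP) and r^λ = (I − γλP)⁻¹ r, the matrix I − P^λ is invertible and the generalized Bellman equation v = r^λ + P^λ v has the unique solution v = (I − γP)⁻¹ r. -/
/-!
A row-stochastic matrix has ℓ∞-operator norm at most `1`, so for `|c| < 1` the Neumann series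
inverts `I - c P`. Since `I - P^λ = (I - γλP)⁻¹ (I - γP)`, the generalized Bellman equation
`(I - P^λ) v = r^λ` is the ordinary one, `(I - γP) v = r`, premultiplied by `(I - γλP)⁻¹`.
-/

open Matrix

namespace Matrix

variable {n : Type*} [Fintype n] [DecidableEq n]

section Stochastic

attribute [local instance] Matrix.linftyOpNormedRing Matrix.linftyOpNormedAlgebra

theorem linfty_opNorm_le_one_of_mem_rowStochastic {P : Matrix n n ℝ}
    (hP : P ∈ rowStochastic ℝ n) : ‖P‖ ≤ 1 := by
  rw [linfty_opNorm_def, NNReal.coe_le_one]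
  refine Finset.sup_le fun i _ => le_of_eq ?_
  rw [← NNReal.coe_inj]
  push_cast
  simp_rw [Real.norm_eq_abs, abs_of_nonneg (nonneg_of_mem_rowStochastic hP)]
  exact sum_row_of_mem_rowStochastic hP i

theorem isUnit_one_sub_smul_of_mem_rowStochastic {P : Matrix n n ℝ}
    (hP : P ∈ rowStochastic ℝ n) {c : ℝ} (hc : |c| < 1) : IsUnit (1 - c • P) :=
  (Units.oneSub (c • P) <| calc
    ‖c • P‖ = |c| * ‖P‖ := by rw [norm_smul, Real.norm_eq_abs]
    _ ≤ |c| * 1 := by gcongr; exact linfty_opNorm_le_one_of_mem_rowStochastic hP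
    _ < 1 := by rwa [mul_one]).isUnit

end Stochastic

variable {R : Type*} [CommRing R]

theorem mulVec_eq_iff_eq_inv_mulVec {A : Matrix n n R} (hA : IsUnit A) {v r : n → R} :
    A *ᵥ v = r ↔ v = A⁻¹ *ᵥ r := by
  have hdet := (isUnit_iff_isUnit_det A).1 hA
  constructor
  · rintro rfl
    rw [mulVec_mulVec, nonsing_inv_mul A hdet, one_mulVec]
  · rintro rfl
    rw [mulVec_mulVec, mul_nonsing_inv A hdet, one_mulVec]

theorem inv_mulVec_eq_inv_mulVec_iff {A : Matrix n n R} (hA : IsUnit A) {u w : n → R} :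
    A⁻¹ *ᵥ u = A⁻¹ *ᵥ w ↔ u = w := by
  have hdet := (isUnit_iff_isUnit_det A).1 hA
  rw [mulVec_eq_iff_eq_inv_mulVec (isUnit_nonsing_inv_iff.2 hA), mulVec_mulVec,
    nonsing_inv_nonsing_inv A hdet, mul_nonsing_inv A hdet, one_mulVec]

theorem eq_inv_mulVec_add_one_sub_inv_mul_mulVec_iff {A B : Matrix n n R} (hA : IsUnit A)
    (hB : IsUnit B) (r v : n → R) :
    v = A⁻¹ *ᵥ r + (1 - A⁻¹ * B) *ᵥ v ↔ v = B⁻¹ *ᵥ r :=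
  calc v = A⁻¹ *ᵥ r + (1 - A⁻¹ * B) *ᵥ v ↔ A⁻¹ *ᵥ (B *ᵥ v) = A⁻¹ *ᵥ r := by
        rw [sub_mulVec, one_mulVec, ← mulVec_mulVec]
        constructor <;> intro h <;> linear_combination h
    _ ↔ B *ᵥ v = r := inv_mulVec_eq_inv_mulVec_iff hA
    _ ↔ v = B⁻¹ *ᵥ r := mulVec_eq_iff_eq_inv_mulVec hB

end Matrix

/-- Unique solution of the generalized Bellman equation of ETD(λ): for a row-stochastic
`P`, `γ ∈ (0,1)`, `λ ∈ [0,1]`, `I − γλP` is invertible; with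
`P^λ = I − (I − γλP)⁻¹(I − γP)` and `r^λ = (I − γλP)⁻¹ r`, the matrix `I − P^λ` is
invertible and `v = r^λ + P^λ v` holds iff `v = (I − γP)⁻¹ r`. -/
theorem etd_generalized_bellman_unique_solution
    (k : ℕ) (P : Matrix (Fin k) (Fin k) ℝ)
    (hP0 : ∀ i j, 0 ≤ P i j) (hP1 : ∀ i, ∑ j, P i j = 1)
    (γ lam : ℝ) (hγ0 : 0 < γ) (hγ1 : γ < 1) (hlam0 : 0 ≤ lam) (hlam1 : lam ≤ 1)
    (r : Fin k → ℝ)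
    (Pl : Matrix (Fin k) (Fin k) ℝ)
    (hPl : Pl = 1 - (1 - (γ * lam) • P)⁻¹ * (1 - γ • P))
    (rl : Fin k → ℝ)
    (hrl : rl = (1 - (γ * lam) • P)⁻¹ *ᵥ r) :
    IsUnit (1 - (γ * lam) • P)
    ∧ IsUnit (1 - Pl)
    ∧ ∀ v : Fin k → ℝ, (v = rl + Pl *ᵥ v ↔ v = (1 - γ • P)⁻¹ *ᵥ r) := by
  have hP : P ∈ rowStochastic ℝ (Fin k) := mem_rowStochastic_iff_sum.2 ⟨hP0, hP1⟩
  have hγlam : |γ * lam| < 1 := by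
    rw [abs_of_nonneg (by positivity)]
    nlinarith
  have hA := isUnit_one_sub_smul_of_mem_rowStochastic hP hγlam
  have hB := isUnit_one_sub_smul_of_mem_rowStochastic hP (c := γ) (by rwa [abs_of_pos hγ0])
  have h1Pl : 1 - Pl = (1 - (γ * lam) • P)⁻¹ * (1 - γ • P) := by rw [hPl, sub_sub_cancel]
  refine ⟨hA, h1Pl ▸ (isUnit_nonsing_inv_iff.2 hA).mul hB, fun v => ?_⟩
  rw [hPl, hrl]
  exact eq_inv_mulVec_add_one_sub_inv_mul_mulVec_iff hA hB r v
end

section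
/- Conditionally column-stochastic mixing preserves the block average in conditional expectation: on a probability space with a sub-σ-algebra F, let C be a random n×n real matrix and X a random vector in ℝ^{nk}, both integrable with (C ⊗ I_k)X integrable, such that C is conditionally independent of X given F and 𝟙ᵀ E[C | F] = 𝟙ᵀ almost surely (i.e., E[C | F] is column-stochastic up to nonnegativity). Then E[ (1/n)(𝟙ᵀ ⊗ I_k)(C ⊗ I_k) X | F ] = E[ (1/n)(𝟙ᵀ ⊗ I_k) X | F ] almost surely; that is, the conditional expectation of the block average of the mixed vector equals the conditional expectation of the block average of the vector itself. -/
open Matrix Kronecker MeasureTheory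

open ProbabilityTheory


lemma countable_generatePiSystem' {α : Type*} {S : Set (Set α)} (hS : S.Countable) :
    (generatePiSystem S).Countable := by
  have h : generatePiSystem S ⊆ (fun T : Set (Set α) => ⋂₀ T) ''
      {T : Set (Set α) | T.Finite ∧ T ⊆ S} := by
    intro s hs
    induction hs with
    | base h =>
      exact ⟨{_}, ⟨Set.finite_singleton _, Set.singleton_subset_iff.2 h⟩, by simp⟩
    | inter h_s h_t _ ihs iht =>
      obtain ⟨T1, ⟨hT1f, hT1s⟩, rfl⟩ := ihs
      obtain ⟨T2, ⟨hT2f, hT2s⟩, rfl⟩ := iht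
      exact ⟨T1 ∪ T2, ⟨hT1f.union hT2f, Set.union_subset hT1s hT2s⟩,
        by simp [Set.sInter_union]⟩
  exact ((Set.countable_setOf_finite_subset hS).image _).mono h

lemma ae_indepFun_of_condIndepFun' {Ω β γ : Type*} {m0 : MeasurableSpace Ω}
    [StandardBorelSpace Ω]
    [mβ : MeasurableSpace β] [mγ : MeasurableSpace γ]
    [MeasurableSpace.CountablyGenerated β] [MeasurableSpace.CountablyGenerated γ]
    {μ : Measure Ω} [IsFiniteMeasure μ] {F : MeasurableSpace Ω} (hF : F ≤ m0)
    {f : Ω → β} {g : Ω → γ} (hf : Measurable[m0] f) (hg : Measurable[m0] g)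
    (h : CondIndepFun F hF f g μ) :
    ∀ᵐ ω ∂μ, IndepFun f g (condExpKernel (mΩ := m0) μ F ω) := by
  set S := generatePiSystem (MeasurableSpace.countableGeneratingSet β) with hSdef
  set T := generatePiSystem (MeasurableSpace.countableGeneratingSet γ) with hTdef
  have hSc : S.Countable :=
    countable_generatePiSystem' MeasurableSpace.countable_countableGeneratingSet
  have hTc : T.Countable :=
    countable_generatePiSystem' MeasurableSpace.countable_countableGeneratingSet
  have hSm : ∀ s ∈ S, MeasurableSet s := fun s hs =>
    generatePiSystem_measurableSet
      (fun t ht => MeasurableSpace.measurableSet_countableGeneratingSet ht) s hs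
  have hTm : ∀ t ∈ T, MeasurableSet t := fun t ht =>
    generatePiSystem_measurableSet
      (fun u hu => MeasurableSpace.measurableSet_countableGeneratingSet hu) t ht
  have hgenβ : mβ = MeasurableSpace.generateFrom S := by
    rw [hSdef, generateFrom_generatePiSystem_eq,
      MeasurableSpace.generateFrom_countableGeneratingSet]
  have hgenγ : mγ = MeasurableSpace.generateFrom T := by
    rw [hTdef, generateFrom_generatePiSystem_eq,
      MeasurableSpace.generateFrom_countableGeneratingSet]
  have key : ∀ᵐ ω ∂μ, ∀ s ∈ S, ∀ t ∈ T,
      condExpKernel (mΩ := m0) μ F ω (f ⁻¹' s ∩ g ⁻¹' t)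
        = condExpKernel (mΩ := m0) μ F ω (f ⁻¹' s) * condExpKernel (mΩ := m0) μ F ω (g ⁻¹' t) := by
    rw [ae_ball_iff hSc]
    intro s hs
    rw [ae_ball_iff hTc]
    intro t ht
    refine ae_of_ae_trim hF ?_
    exact h (f ⁻¹' s) (g ⁻¹' t) ⟨s, hSm s hs, rfl⟩ ⟨t, hTm t ht, rfl⟩
  filter_upwards [key] with ω hω
  haveI : IsProbabilityMeasure (condExpKernel (mΩ := m0) μ F ω) := inferInstance
  refine IndepSets.indep (p1 := (f ⁻¹' ·) '' S) (p2 := (g ⁻¹' ·) '' T)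
    hf.comap_le hg.comap_le ?_ ?_ ?_ ?_ ?_
  · rintro _ ⟨s, hs, rfl⟩ _ ⟨t, ht, rfl⟩ hne
    rw [← Set.preimage_inter]
    exact ⟨s ∩ t, generatePiSystem.inter hs ht
      (Set.nonempty_of_nonempty_preimage (by rwa [Set.preimage_inter])), rfl⟩
  · rintro _ ⟨s, hs, rfl⟩ _ ⟨t, ht, rfl⟩ hne
    rw [← Set.preimage_inter]
    exact ⟨s ∩ t, generatePiSystem.inter hs ht
      (Set.nonempty_of_nonempty_preimage (by rwa [Set.preimage_inter])), rfl⟩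
  · rw [hgenβ, MeasurableSpace.comap_generateFrom]
  · rw [hgenγ, MeasurableSpace.comap_generateFrom]
  · rintro _ _ ⟨s, hs, rfl⟩ ⟨t, ht, rfl⟩
    refine ae_of_all _ fun _ => ?_
    simpa only [Kernel.const_apply] using hω s hs t ht

lemma mix_apply' {n k : ℕ} (A : Fin n → Fin n → ℝ) (v : Fin n × Fin k → ℝ) (i : Fin n)
    (j : Fin k) :
    ((Matrix.of A ⊗ₖ (1 : Matrix (Fin k) (Fin k) ℝ)) *ᵥ v) (i, j)
      = ∑ i', A i i' * v (i', j) := by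
  simp only [Matrix.mulVec, dotProduct, Fintype.sum_prod_type, Matrix.kroneckerMap_apply,
    Matrix.of_apply, Matrix.one_apply, mul_ite, mul_one, mul_zero, ite_mul, zero_mul]
  exact Finset.sum_congr rfl fun i' _ => by rw [Finset.sum_ite_eq Finset.univ j]; simp


/-- Conditionally column-stochastic mixing preserves the block average in conditional
expectation: if `C` is conditionally independent of `X` given `F` and
`𝟙ᵀ E[C | F] = 𝟙ᵀ` a.s., then
`E[(1/n)(𝟙ᵀ ⊗ I_k)(C ⊗ I_k)X | F] = E[(1/n)(𝟙ᵀ ⊗ I_k)X | F]` a.s. -/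
theorem conditionally_column_stochastic_mixing_preserves_block_average
    {Ω : Type*} (F : MeasurableSpace Ω) {m0 : MeasurableSpace Ω} [StandardBorelSpace Ω]
    (μ : Measure Ω) [IsProbabilityMeasure μ]
    (hF : F ≤ m0)
    (n k : ℕ)
    (C : Ω → Fin n → Fin n → ℝ) (X : Ω → Fin n × Fin k → ℝ)
    (hCmeas : Measurable C) (hXmeas : Measurable X)
    (hCint : ∀ i j, Integrable (fun ω' => C ω' i j) μ)
    (hXint : Integrable X μ)
    (hmixint : Integrable
      (fun ω' => (Matrix.of (C ω') ⊗ₖ (1 : Matrix (Fin k) (Fin k) ℝ)) *ᵥ X ω') μ)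
    (hindep : ProbabilityTheory.CondIndepFun F hF C X μ)
    (hcol : ∀ j : Fin n, ∀ᵐ ω' ∂μ, ∑ i, (μ[fun ω'' => C ω'' i j | F]) ω' = 1) :
    μ[fun ω' => fun j : Fin k =>
        (n : ℝ)⁻¹ * ∑ i, ((Matrix.of (C ω') ⊗ₖ (1 : Matrix (Fin k) (Fin k) ℝ)) *ᵥ X ω') (i, j)
      | F]
    =ᵐ[μ]
    μ[fun ω' => fun j : Fin k => (n : ℝ)⁻¹ * ∑ i, X ω' (i, j) | F] := by
  classical
  letI : MeasurableSpace Ω := m0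
  -- the averaging continuous linear map
  let L : (Fin n × Fin k → ℝ) →L[ℝ] (Fin k → ℝ) :=
    ContinuousLinearMap.pi (fun j => (n : ℝ)⁻¹ • ∑ i : Fin n, ContinuousLinearMap.proj (i, j))
  have hL : ∀ (v : Fin n × Fin k → ℝ) (j : Fin k), L v j = (n : ℝ)⁻¹ * ∑ i, v (i, j) := by
    intro v j
    simp [L, ContinuousLinearMap.pi_apply, ContinuousLinearMap.smul_apply,
      ContinuousLinearMap.sum_apply, ContinuousLinearMap.proj_apply, smul_eq_mul]
  have hg_eq : (fun ω' => fun j : Fin k =>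
      (n : ℝ)⁻¹ * ∑ i, ((Matrix.of (C ω') ⊗ₖ (1 : Matrix (Fin k) (Fin k) ℝ)) *ᵥ X ω') (i, j))
      = fun ω' => L ((Matrix.of (C ω') ⊗ₖ (1 : Matrix (Fin k) (Fin k) ℝ)) *ᵥ X ω') := by
    funext ω' j; rw [hL]
  have hh_eq : (fun ω' => fun j : Fin k => (n : ℝ)⁻¹ * ∑ i, X ω' (i, j))
      = fun ω' => L (X ω') := by
    funext ω' j; rw [hL]
  rw [hg_eq, hh_eq]
  have hgint : Integrable (fun ω' =>
      L ((Matrix.of (C ω') ⊗ₖ (1 : Matrix (Fin k) (Fin k) ℝ)) *ᵥ X ω')) μ :=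
    L.integrable_comp hmixint
  have hhint : Integrable (fun ω' => L (X ω')) μ := L.integrable_comp hXint
  refine (condExp_ae_eq_integral_condExpKernel (mΩ := m0) hF hgint).trans
    (Filter.EventuallyEq.trans ?_ (condExp_ae_eq_integral_condExpKernel (mΩ := m0) hF hhint).symm)
  have hCm0 : Measurable[m0] C := hCmeas
  have hXm0 : Measurable[m0] X := hXmeas
  have hind := ae_indepFun_of_condIndepFun' hF hCm0 hXm0 hindep
  have hCker : ∀ᵐ ω ∂μ, ∀ i i', Integrable (fun y => C y i i')
      (condExpKernel (mΩ := m0) μ F ω) := by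
    rw [ae_all_iff]; intro i; rw [ae_all_iff]; intro i'
    exact (hCint i i').condExpKernel_ae (mΩ := m0)
  have hXker : ∀ᵐ ω ∂μ, Integrable X (condExpKernel (mΩ := m0) μ F ω) :=
    hXint.condExpKernel_ae (mΩ := m0)
  have hmixker : ∀ᵐ ω ∂μ, Integrable
      (fun ω' => (Matrix.of (C ω') ⊗ₖ (1 : Matrix (Fin k) (Fin k) ℝ)) *ᵥ X ω')
      (condExpKernel (mΩ := m0) μ F ω) := hmixint.condExpKernel_ae (mΩ := m0)
  have hcolae : ∀ᵐ ω ∂μ, ∀ j : Fin n, ∑ i, (μ[fun ω'' => C ω'' i j | F]) ω = 1 :=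
    ae_all_iff.2 hcol
  have hCcond : ∀ᵐ ω ∂μ, ∀ i i', (μ[fun ω'' => C ω'' i i' | F]) ω
      = ∫ y, C y i i' ∂(condExpKernel (mΩ := m0) μ F ω) := by
    rw [ae_all_iff]; intro i; rw [ae_all_iff]; intro i'
    exact condExp_ae_eq_integral_condExpKernel (mΩ := m0) hF (hCint i i')
  filter_upwards [hind, hCker, hXker, hmixker, hcolae, hCcond]
    with ω hindω hCkerω hXkerω hmixkerω hcolω hCcondω
  set ν := condExpKernel (mΩ := m0) μ F ω with hν
  haveI : IsProbabilityMeasure ν := IsMarkovKernel.isProbabilityMeasure (κ := condExpKernel (mΩ := m0) μ F) ω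
  rw [L.integral_comp_comm hmixkerω, L.integral_comp_comm hXkerω]
  funext j
  rw [hL, hL]
  congr 1
  have hXcoord : ∀ p : Fin n × Fin k, Integrable (fun y => X y p) ν := fun p =>
    (ContinuousLinearMap.proj (R := ℝ) (φ := fun _ : Fin n × Fin k => ℝ) p).integrable_comp hXkerω
  have hproj : ∀ (V : Ω → Fin n × Fin k → ℝ), Integrable V ν →
      ∀ p : Fin n × Fin k, (∫ y, V y ∂ν) p = ∫ y, V y p ∂ν := fun V hV p =>
    ((ContinuousLinearMap.proj p (R := ℝ) (φ := fun _ : Fin n × Fin k => ℝ)).integral_comp_comm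
      hV).symm
  have hip : ∀ (i i' : Fin n),
      IndepFun (fun y => C y i i') (fun y => X y (i', j)) ν := fun i i' =>
    hindω.comp ((measurable_pi_apply i').comp (measurable_pi_apply i))
      (measurable_pi_apply (i', j))
  have hprod : ∀ i i' : Fin n, Integrable (fun y => C y i i' * X y (i', j)) ν := fun i i' =>
    (hip i i').integrable_mul (hCkerω i i') (hXcoord (i', j))
  calc ∑ i, (∫ y, ((Matrix.of (C y) ⊗ₖ (1 : Matrix (Fin k) (Fin k) ℝ)) *ᵥ X y) ∂ν) (i, j)
      = ∑ i, ∑ i', ∫ y, C y i i' * X y (i', j) ∂ν := by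
        refine Finset.sum_congr rfl fun i _ => ?_
        rw [hproj _ hmixkerω (i, j)]
        have : (fun y => ((Matrix.of (C y) ⊗ₖ (1 : Matrix (Fin k) (Fin k) ℝ)) *ᵥ X y) (i, j))
            = fun y => ∑ i', C y i i' * X y (i', j) := by
          funext y; exact mix_apply' (C y) (X y) i j
        rw [this, integral_finset_sum _ (fun i' _ => hprod i i')]
    _ = ∑ i, ∑ i', (∫ y, C y i i' ∂ν) * ∫ y, X y (i', j) ∂ν := by
        refine Finset.sum_congr rfl fun i _ => Finset.sum_congr rfl fun i' _ => ?_
        exact (hip i i').integral_mul_eq_mul_integral (hCkerω i i').aestronglyMeasurable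
          (hXcoord (i', j)).aestronglyMeasurable
    _ = ∑ i', (∑ i, ∫ y, C y i i' ∂ν) * ∫ y, X y (i', j) ∂ν := by
        rw [Finset.sum_comm]; simp_rw [Finset.sum_mul]
    _ = ∑ i', ∫ y, X y (i', j) ∂ν := by
        refine Finset.sum_congr rfl fun i' _ => ?_
        have : ∑ i, ∫ y, C y i i' ∂ν = 1 := by
          rw [← hcolω i']
          exact Finset.sum_congr rfl fun i _ => (hCcondω i i').symm
        rw [this, one_mul]
    _ = ∑ i', (∫ y, X y ∂ν) (i', j) := by
        exact Finset.sum_congr rfl fun i' _ => (hproj _ hXkerω (i', j)).symm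
end
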